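/- Let A be a unital C*-algebra and let s ∈ A satisfy ‖Im s‖ < ε for some ε ∈ (0,1). Then ‖Im(γ⊗Ψ(s) + γ*⊗Ψ(s)⁻¹)‖ ≤ 4‖γ‖·ε/(1-ε)² for any matrix γ ∈ M_m(ℂ), where Ψ(s) = (s+i)(s-i)⁻¹ and the imaginary part is taken in M_m(ℂ)⊗A. -/

import Mathlib

open Complex
open scoped Matrix.Norms.L2Operator

/-- The imaginary part `Im s = (s - s*)/(2i)` of an element of a complex star algebra. -/
noncomputable def imPart {A : Type*} [Ring A] [StarRing A] [Module ℂ A] (s : A) : A :=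
  ((2 * Complex.I)⁻¹ : ℂ) • (s - star s)

/-!
An element `x` of a C⋆-algebra with `ℑ x ≥ δ > 0` is invertible with `‖x⁻¹‖ ≤ δ⁻¹`: conjugating
by `k = (ℑ x)⁻¹` gives `x⋆ k x = x k x⋆ = (ℜ x) k (ℜ x) + ℑ x ≥ δ`, so `x` has inverses on both
sides, and for `y = x⁻¹` the identity `ℑ (y⋆ x y) = y⋆ (ℑ x) y` yields `δ y⋆y ≤ ℑ y⋆`, whence
`δ ‖y‖² ≤ ‖y‖`. Since `‖ℑ s‖ ≤ ε`, this applies to `s + i` and `(s - i)⋆ = s⋆ + i` with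
`δ = 1 - ε`.

Because `φ` and `ι` have commuting ranges, `Im (φ γ ι u + φ γ⋆ ι v) = Im (φ γ ι (u - v⋆))`, and for
`u = Ψ(s)`, `v = Ψ(s)⁻¹` one computes `u - v⋆ = 4 ((s + i)⁻¹)⋆ (Im s) (s - i)⁻¹`.
-/

open ComplexStarModule

section StarRing

variable {A : Type*} [Ring A] [StarRing A] [Module ℂ A]

lemma imPart_eq_imaginaryPart [StarModule ℂ A] (s : A) : imPart s = ℑ s := by
  rw [imPart, imaginaryPart_apply_coe, ← Complex.coe_smul, smul_smul]
  congr 1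
  field_simp
  simp

lemma imPart_mul_add_star_mul (p x y : A) (h : Commute p (star y)) :
    imPart (p * x + star p * y) = imPart (p * (x - star y)) := by
  have hstar : star p * y = y * star p := by simpa using congrArg star h.symm
  rw [imPart, imPart]
  congr 1
  simp only [star_add, star_mul, star_star, star_sub, mul_sub, hstar, h.eq]
  abel

end StarRing

section StarAlgebra

variable {A : Type*} [Ring A] [StarRing A] [Algebra ℂ A] [StarModule ℂ A]

lemma cayley_sub_star_cayley_inv (s : A) (hplus : IsUnit (s + I • 1))
    (hminus : IsUnit (s - I • 1)) :
    (s + I • 1) * Ring.inverse (s - I • 1) - star ((s - I • 1) * Ring.inverse (s + I • 1)) =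
      (4 : ℂ) • (star (Ring.inverse (s + I • 1)) * imPart s * Ring.inverse (s - I • 1)) := by
  set p := star (Ring.inverse (s + I • 1))
  set w := Ring.inverse (s - I • 1)
  have hstar_plus : star (s + I • (1 : A)) = star s - I • 1 := by
    rw [star_add, star_smul, star_one, star_def, conj_I, neg_smul, sub_eq_add_neg]
  have hstar_minus : star (s - I • (1 : A)) = star s + I • 1 := by
    rw [star_sub, star_smul, star_one, star_def, conj_I, neg_smul, sub_neg_eq_add]
  have hp : p * (star s - I • 1) = 1 := by
    rw [← hstar_plus, ← star_mul, Ring.mul_inverse_cancel _ hplus, star_one]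
  have hw : (s - I • 1) * w = 1 := Ring.mul_inverse_cancel _ hminus
  calc (s + I • 1) * w - star ((s - I • 1) * Ring.inverse (s + I • 1))
      = p * ((star s - I • 1) * (s + I • 1) - (star s + I • 1) * (s - I • 1)) * w := by
        rw [star_mul, hstar_minus, mul_sub, sub_mul, ← mul_assoc p, hp, one_mul, mul_assoc,
          mul_assoc, hw, mul_one]
    _ = p * ((4 : ℂ) • imPart s) * w := by
        have h4 : (4 : ℂ) * (2 * I)⁻¹ = -2 * I := by
          field_simp
          simp [I_sq]
          norm_num
        congr 2
        rw [imPart, smul_smul, h4]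
        simp only [mul_add, add_mul, sub_mul, mul_sub, smul_mul_assoc, mul_smul_comm,
          smul_smul, mul_one, one_mul, I_mul_I, smul_add, smul_sub]
        module
    _ = _ := by rw [mul_smul_comm, smul_mul_assoc]

lemma sub_I_smul_one_eq_star (s : A) : s - I • 1 = star (star s + I • 1) := by
  rw [star_add, star_star, star_smul, star_one, star_def, conj_I, neg_smul, sub_eq_add_neg]

lemma imaginaryPart_star_mul_mul (z x : A) :
    (ℑ (star z * x * z) : A) = star z * ℑ x * z := by
  simp only [imaginaryPart_apply_coe, star_mul, star_star, mul_assoc, ← mul_sub, ← sub_mul,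
    mul_smul_comm, smul_mul_assoc]

end StarAlgebra

lemma norm_imaginaryPart_le {E : Type*} [SeminormedAddCommGroup E] [NormedSpace ℂ E]
    [StarAddMonoid E] [NormedStarGroup E] [StarModule ℂ E] (x : E) : ‖(ℑ x : E)‖ ≤ ‖x‖ := by
  rw [imaginaryPart_apply_coe, norm_smul, norm_smul]
  calc ‖-I‖ * (‖(2 : ℝ)⁻¹‖ * ‖x - star x‖) ≤ 1 * (2⁻¹ * (‖x‖ + ‖star x‖)) := by
        gcongr
        · simp
        · simp
        · exact norm_sub_le _ _
    _ = ‖x‖ := by rw [norm_star]; ring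

lemma imaginaryPart_star {E : Type*} [AddCommGroup E] [Module ℂ E] [StarAddMonoid E]
    [StarModule ℂ E] (x : E) : ℑ (star x) = -ℑ x := by
  ext
  simp [imaginaryPart_apply_coe, ← smul_neg]

lemma norm_imaginaryPart_star {E : Type*} [SeminormedAddCommGroup E] [NormedSpace ℂ E]
    [StarAddMonoid E] [StarModule ℂ E] (x : E) : ‖(ℑ (star x) : E)‖ = ‖(ℑ x : E)‖ := by
  rw [imaginaryPart_star, AddSubgroup.coe_neg, norm_neg]

section CStarAlgebra

variable {A : Type*} [CStarAlgebra A] [PartialOrder A] [StarOrderedRing A]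

lemma isUnit_of_algebraMap_le_imaginaryPart {x : A} {δ : ℝ} (hδ : 0 < δ)
    (hx : algebraMap ℝ A δ ≤ ℑ x) : IsUnit x := by
  set a : A := (ℜ x : A)
  set h : A := (ℑ x : A)
  have hδpos : IsStrictlyPositive (algebraMap ℝ A δ) := isStrictlyPositive_algebraMap hδ
  have hhpos : IsStrictlyPositive h := hδpos.of_le hx
  set k := Ring.inverse h
  have hk : 0 ≤ k := hhpos.ringInverse.nonneg
  have hkh : k * h = 1 := Ring.inverse_mul_cancel h hhpos.isUnit
  have hhk : h * k = 1 := Ring.mul_inverse_cancel h hhpos.isUnit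
  have hx_eq : x = a + I • h := (realPart_add_I_smul_imaginaryPart x).symm
  have hxs_eq : star x = a - I • h := by
    rw [hx_eq, star_add, star_smul, (ℜ x).2.star_eq, (ℑ x).2.star_eq, star_def, conj_I,
      neg_smul, sub_eq_add_neg]
  have hleft : star x * k * x = a * k * a + h := by
    rw [hxs_eq, hx_eq]
    simp only [sub_mul, mul_add, smul_mul_assoc, mul_smul_comm, mul_assoc, hkh, hhk, smul_smul,
      I_mul_I, mul_one, one_mul, smul_sub, neg_one_smul]
    abel
  have hright : x * k * star x = a * k * a + h := by
    rw [hxs_eq, hx_eq]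
    simp only [add_mul, mul_sub, smul_mul_assoc, mul_smul_comm, mul_assoc, hkh, hhk, smul_smul,
      I_mul_I, mul_one, one_mul, smul_add, neg_one_smul]
    abel
  have hq : IsStrictlyPositive (a * k * a + h) :=
    .nonneg_add ((ℜ x).2.conjugate_nonneg hk) hhpos
  refine isUnit_iff_exists_and_exists.mpr ⟨⟨k * star x * Ring.inverse (a * k * a + h), ?_⟩,
    ⟨Ring.inverse (a * k * a + h) * star x * k, ?_⟩⟩
  · rw [← mul_assoc, ← mul_assoc, hright, Ring.mul_inverse_cancel _ hq.isUnit]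
  · rw [mul_assoc, mul_assoc, ← mul_assoc (star x), hleft, Ring.inverse_mul_cancel _ hq.isUnit]

lemma norm_inverse_le_of_algebraMap_le_imaginaryPart {x : A} {δ : ℝ} (hδ : 0 < δ)
    (hx : algebraMap ℝ A δ ≤ ℑ x) : ‖Ring.inverse x‖ ≤ δ⁻¹ := by
  have hxu := isUnit_of_algebraMap_le_imaginaryPart hδ hx
  set y := Ring.inverse x
  have hconj : δ • (star y * y) ≤ ℑ (star y) := by
    have hxy : x * y = 1 := Ring.mul_inverse_cancel x hxu
    have := star_left_conjugate_le_conjugate hx y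
    rwa [← imaginaryPart_star_mul_mul, mul_assoc (star y) x, hxy, mul_one,
      Algebra.algebraMap_eq_smul_one, mul_smul_comm, mul_one, smul_mul_assoc] at this
  have hsq : δ * ‖y‖ ^ 2 ≤ ‖y‖ := by
    have hnonneg : 0 ≤ δ • (star y * y) := smul_nonneg hδ.le (star_mul_self_nonneg y)
    calc δ * ‖y‖ ^ 2 = ‖δ • (star y * y)‖ := by
          rw [norm_smul, CStarRing.norm_star_mul_self, Real.norm_of_nonneg hδ.le, sq]
      _ ≤ ‖(ℑ (star y) : A)‖ := CStarAlgebra.norm_le_norm_of_nonneg_of_le hnonneg hconj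
      _ ≤ ‖star y‖ := norm_imaginaryPart_le _
      _ = ‖y‖ := norm_star y
  rw [← mul_le_mul_iff_right₀ hδ, mul_inv_cancel₀ hδ.ne']
  nlinarith [norm_nonneg y]

lemma algebraMap_le_imaginaryPart_add_I_smul_one {s : A} {ε : ℝ} (hs : ‖(ℑ s : A)‖ ≤ ε) :
    algebraMap ℝ A (1 - ε) ≤ ℑ (s + I • 1) := by
  have hlower := (ℑ s).2.neg_algebraMap_norm_le_self
  have hε : algebraMap ℝ A ‖(ℑ s : A)‖ ≤ algebraMap ℝ A ε := algebraMap_mono A hs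
  rw [map_add, imaginaryPart_I_smul, realPart_one, map_sub, map_one, AddSubgroup.coe_add,
    selfAdjoint.val_one]
  calc 1 - algebraMap ℝ A ε ≤ 1 - algebraMap ℝ A ‖(ℑ s : A)‖ := sub_le_sub_left hε 1
    _ = -algebraMap ℝ A ‖(ℑ s : A)‖ + 1 := by abel
    _ ≤ ℑ s + 1 := by gcongr

variable {s : A} {ε : ℝ} (hs : ‖(ℑ s : A)‖ ≤ ε) (hε : ε < 1)
include hs hε

lemma isUnit_add_I_smul_one : IsUnit (s + I • 1) :=
  isUnit_of_algebraMap_le_imaginaryPart (sub_pos.mpr hε)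
    (algebraMap_le_imaginaryPart_add_I_smul_one hs)

lemma norm_inverse_add_I_smul_one_le : ‖Ring.inverse (s + I • 1)‖ ≤ (1 - ε)⁻¹ :=
  norm_inverse_le_of_algebraMap_le_imaginaryPart (sub_pos.mpr hε)
    (algebraMap_le_imaginaryPart_add_I_smul_one hs)

lemma isUnit_sub_I_smul_one : IsUnit (s - I • 1) := by
  rw [sub_I_smul_one_eq_star]
  exact (isUnit_add_I_smul_one (by rwa [norm_imaginaryPart_star]) hε).star

lemma norm_inverse_sub_I_smul_one_le : ‖Ring.inverse (s - I • 1)‖ ≤ (1 - ε)⁻¹ := by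
  rw [sub_I_smul_one_eq_star, Ring.inverse_star, norm_star]
  exact norm_inverse_add_I_smul_one_le (by rwa [norm_imaginaryPart_star]) hε

lemma norm_cayley_sub_star_cayley_inv_le :
    ‖(s + I • 1) * Ring.inverse (s - I • 1) - star ((s - I • 1) * Ring.inverse (s + I • 1))‖ ≤
      4 * ((1 - ε)⁻¹ * ε * (1 - ε)⁻¹) := by
  rw [cayley_sub_star_cayley_inv s (isUnit_add_I_smul_one hs hε) (isUnit_sub_I_smul_one hs hε),
    norm_smul, imPart_eq_imaginaryPart, Complex.norm_ofNat]
  have hε0 : 0 ≤ ε := (norm_nonneg _).trans hs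
  have hδ : 0 < (1 - ε)⁻¹ := inv_pos.mpr (sub_pos.mpr hε)
  refine mul_le_mul_of_nonneg_left (norm_mul₃_le.trans ?_) (by norm_num)
  gcongr
  · rw [norm_star]
    exact norm_inverse_add_I_smul_one_le hs hε
  · exact norm_inverse_sub_I_smul_one_le hs hε

end CStarAlgebra

theorem imPart_cayley_tensor_bound_general
    {A : Type*} [NormedRing A] [StarRing A] [CStarRing A] [NormedAlgebra ℂ A]
    [CompleteSpace A] [StarModule ℂ A]
    {B : Type*} [NormedRing B] [StarRing B] [CStarRing B] [NormedAlgebra ℂ B]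
    [CompleteSpace B] [StarModule ℂ B]
    {m : ℕ}
    (φ : Matrix (Fin m) (Fin m) ℂ →⋆ₐ[ℂ] B) (ι : A →⋆ₐ[ℂ] B)
    (hcomm : ∀ (γ : Matrix (Fin m) (Fin m) ℂ) (a : A), φ γ * ι a = ι a * φ γ)
    (s : A) (ε : ℝ) (hε1 : ε < 1) (hIm : ‖imPart s‖ < ε)
    (γ : Matrix (Fin m) (Fin m) ℂ) :
    ‖imPart (φ γ * ι ((s + Complex.I • (1 : A)) * Ring.inverse (s - Complex.I • (1 : A))) +
        φ (star γ) * ι ((s - Complex.I • (1 : A)) * Ring.inverse (s + Complex.I • (1 : A))))‖ ≤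
      4 * ‖γ‖ * ε / (1 - ε) ^ 2 := by
  let _ : CStarAlgebra A := {}
  let _ : CStarAlgebra B := {}
  let _ : PartialOrder A := CStarAlgebra.spectralOrder A
  have _ : StarOrderedRing A := CStarAlgebra.spectralOrderedRing A
  have hs : ‖(ℑ s : A)‖ ≤ ε := (imPart_eq_imaginaryPart s ▸ hIm).le
  have hcomm' : Commute (φ γ) (star (ι ((s - I • 1) * Ring.inverse (s + I • 1)))) := by
    rw [← map_star]
    exact hcomm _ _
  rw [map_star φ, imPart_mul_add_star_mul _ _ _ hcomm', ← map_star, ← map_sub,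
    imPart_eq_imaginaryPart]
  calc _ ≤ ‖φ γ * ι ((s + I • 1) * Ring.inverse (s - I • 1) -
          star ((s - I • 1) * Ring.inverse (s + I • 1)))‖ := norm_imaginaryPart_le _
    _ ≤ ‖γ‖ * (4 * ((1 - ε)⁻¹ * ε * (1 - ε)⁻¹)) :=
      norm_mul_le_of_le (NonUnitalStarAlgHom.norm_apply_le φ γ)
        ((NonUnitalStarAlgHom.norm_apply_le ι _).trans (norm_cayley_sub_star_cayley_inv_le hs hε1))
    _ = 4 * ‖γ‖ * ε / (1 - ε) ^ 2 := by field_simp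

/-- Let `s` be an element of a unital C*-algebra `A` with `‖Im s‖ < ε` for some `ε ∈ (0,1)`.
Then, in the C*-tensor product `M_m(ℂ) ⊗ A` (realized via a pair of unital *-homomorphisms
`φ : M_m(ℂ) → B`, `ι : A → B` with commuting ranges into a unital C*-algebra `B`),
`‖Im(γ⊗Ψ(s) + γ*⊗Ψ(s)⁻¹)‖ ≤ 4‖γ‖·ε/(1-ε)²` for every `γ ∈ M_m(ℂ)`,
where `Ψ(s) = (s+i)(s-i)⁻¹` and `‖γ‖` is the operator norm of `γ`. -/
theorem imPart_cayley_tensor_bound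
    {A : Type*} [NormedRing A] [StarRing A] [CStarRing A] [NormedAlgebra ℂ A]
    [CompleteSpace A] [StarModule ℂ A]
    {B : Type*} [NormedRing B] [StarRing B] [CStarRing B] [NormedAlgebra ℂ B]
    [CompleteSpace B] [StarModule ℂ B]
    {m : ℕ}
    (φ : Matrix (Fin m) (Fin m) ℂ →⋆ₐ[ℂ] B) (ι : A →⋆ₐ[ℂ] B)
    (hcomm : ∀ (γ : Matrix (Fin m) (Fin m) ℂ) (a : A), φ γ * ι a = ι a * φ γ)
    (s : A) (ε : ℝ) (hε0 : 0 < ε) (hε1 : ε < 1) (hIm : ‖imPart s‖ < ε)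
    (γ : Matrix (Fin m) (Fin m) ℂ) :
    ‖imPart (φ γ * ι ((s + Complex.I • (1 : A)) * Ring.inverse (s - Complex.I • (1 : A))) +
        φ (star γ) * ι ((s - Complex.I • (1 : A)) * Ring.inverse (s + Complex.I • (1 : A))))‖ ≤
      4 * ‖γ‖ * ε / (1 - ε) ^ 2 :=
  imPart_cayley_tensor_bound_general φ ι hcomm s ε hε1 hIm γ
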